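/- Let 𝒢 = ⊎𝒫 be a temporal k-path graph with source s on base-path P_s, and let T be a switch-path-tree such that at least one switch-vertex-set 𝒱' with T_{𝒱'} = T exists. Define the greedy switch-vertex-set 𝒱 by processing the edges of T from the root outward and, for each tree edge (P_from, P_to), choosing as switchonto_𝒱(P_to) the earliest vertex v on P_to such that P_from contains an edge entering v that lies on the suffix P_from[switchonto_𝒱(P_from):] (with the convention switchonto_𝒱(P_s) = s). Then 𝒱 is well defined, T_𝒱 = T, and for every switch-vertex-set 𝒱' with T_{𝒱'} = T and every base-path P ≠ P_s appearing in T, switchonto_𝒱(P) ≤_P switchonto_{𝒱'}(P); consequently the suffix P[switchonto_{𝒱'}(P):] is contained in the suffix P[switchonto_𝒱(P):]. -/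

import Mathlib

/-- A temporal edge of a directed temporal multigraph: a source, a destination,
and an integer time label. -/
structure TEdge (V : Type) where
  src : V
  dst : V
  lab : ℤ

/-- Two consecutive temporal edges form a valid step of a temporal path/walk:
the head of the first is the tail of the second, and labels strictly increase. -/
def TemporalStep {V : Type} (e f : TEdge V) : Prop :=
  e.dst = f.src ∧ e.lab < f.lab

/-- A temporal path: a sequence of temporal edges forming a directed path with
strictly increasing labels. -/
def IsTemporalPath {V : Type} (p : List (TEdge V)) : Prop :=
  p.Chain' TemporalStep

/-- The list of vertices visited by a list of temporal edges, in order. -/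
def verts {V : Type} (p : List (TEdge V)) : List V :=
  p.map TEdge.src ++ (p.getLast?.map TEdge.dst).toList

/-- `v` occurs on `p` at or before `w`. -/
def le_on {V : Type} (p : List (TEdge V)) (v w : V) : Prop :=
  ∃ m n : ℕ, m ≤ n ∧ (verts p)[m]? = some v ∧ (verts p)[n]? = some w

/-- `v` occurs on `p` strictly before `w`. -/
def lt_on {V : Type} (p : List (TEdge V)) (v w : V) : Prop :=
  ∃ m n : ℕ, m < n ∧ (verts p)[m]? = some v ∧ (verts p)[n]? = some w

/-- The edge relation of the switch tree `T_𝒱` on the base-path indices. -/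
def svsEdge {V : Type} {k : ℕ} (𝒱 : Set (V × Fin k × Fin k)) (a b : Fin k) : Prop :=
  ∃ v, (v, a, b) ∈ 𝒱

/-- A switch-vertex-set (SVS) for the `k`-path graph `⊎ P` with source base-path
index `sIdx`: a set of switches `(v, P_from, P_to)` such that (i) `P_from` has an
edge into `v` and `P_to` has an edge out of `v`; (ii) at most one switch onto each
base-path and none onto the source base-path; (iii) each switch off a base-path
occurs strictly after the switch onto it; (iv) the switches form a directed tree
rooted at the source base-path. -/
structure IsSVS {V : Type} {k : ℕ} (P : Fin k → List (TEdge V)) (sIdx : Fin k)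
    (𝒱 : Set (V × Fin k × Fin k)) : Prop where
  switch_exists : ∀ ⦃v : V⦄ ⦃a b : Fin k⦄, (v, a, b) ∈ 𝒱 →
    (∃ e ∈ P a, e.dst = v) ∧ ∃ e ∈ P b, e.src = v
  unique_onto : ∀ ⦃v v' : V⦄ ⦃a a' b : Fin k⦄,
    (v, a, b) ∈ 𝒱 → (v', a', b) ∈ 𝒱 → v = v' ∧ a = a'
  no_onto_source : ∀ ⦃v : V⦄ ⦃a : Fin k⦄, (v, a, sIdx) ∉ 𝒱
  onto_before_off : ∀ ⦃v : V⦄ ⦃a b : Fin k⦄, (v, a, b) ∈ 𝒱 →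
    ∀ ⦃v' : V⦄ ⦃c : Fin k⦄, (v', b, c) ∈ 𝒱 → lt_on (P b) v v'
  tree : ∀ ⦃v : V⦄ ⦃a b : Fin k⦄, (v, a, b) ∈ 𝒱 →
    Relation.ReflTransGen (svsEdge 𝒱) sIdx a

/-!
The greedy switches are built along `T` from the root: onto each child take the first vertex of
the child that can be reached from the parent after the parent's greedy switch. Induction along
the tree shows that every switch of an SVS realizing `T` is such a candidate, since its parent
switch comes strictly before it and, inductively, not before the greedy one. Hence greedy
candidates exist and come first.
-/

variable {V : Type} {k : ℕ}

lemma src_mem_verts {p : List (TEdge V)} {e : TEdge V} (he : e ∈ p) : e.src ∈ verts p :=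
  List.mem_append_left _ (List.mem_map_of_mem he)

lemma verts_index_unique {p : List (TEdge V)} (nd : (verts p).Nodup) {i j : ℕ} {x : V}
    (hi : (verts p)[i]? = some x) (hj : (verts p)[j]? = some x) : i = j :=
  (List.getElem?_inj (List.getElem?_eq_some_iff.1 hi).1 nd).1 (hi.trans hj.symm)

namespace le_on

variable {p : List (TEdge V)} {u v w : V}

lemma trans_lt (nd : (verts p).Nodup) (h₁ : le_on p u v) (h₂ : lt_on p v w) : lt_on p u w := by
  obtain ⟨m, n, hmn, hm, hn⟩ := h₁
  obtain ⟨n', l, hn'l, hn', hl⟩ := h₂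
  obtain rfl := verts_index_unique nd hn hn'
  exact ⟨m, l, hmn.trans_lt hn'l, hm, hl⟩

lemma trans (nd : (verts p).Nodup) (h₁ : le_on p u v) (h₂ : le_on p v w) : le_on p u w := by
  obtain ⟨m, n, hmn, hm, hn⟩ := h₁
  obtain ⟨n', l, hn'l, hn', hl⟩ := h₂
  obtain rfl := verts_index_unique nd hn hn'
  exact ⟨m, l, hmn.trans hn'l, hm, hl⟩

lemma antisymm (nd : (verts p).Nodup) (h₁ : le_on p v w) (h₂ : le_on p w v) : v = w := by
  obtain ⟨m, n, hmn, hm, hn⟩ := h₁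
  obtain ⟨n', m', hnm', hn', hm'⟩ := h₂
  obtain rfl := verts_index_unique nd hn hn'
  obtain rfl := verts_index_unique nd hm hm'
  obtain rfl := le_antisymm hmn hnm'
  exact Option.some.inj (hm.symm.trans hn)

end le_on

def IsFirstOn (p : List (TEdge V)) (C : V → Prop) (v : V) : Prop :=
  C v ∧ ∀ u, C u → le_on p v u

lemma IsFirstOn.eq {p : List (TEdge V)} {C : V → Prop} {v w : V} (nd : (verts p).Nodup)
    (hv : IsFirstOn p C v) (hw : IsFirstOn p C w) : v = w :=
  (hv.2 w hw.1).antisymm nd (hw.2 v hv.1)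

lemma exists_isFirstOn {p : List (TEdge V)} {C : V → Prop} (hC : ∀ u, C u → u ∈ verts p)
    {u : V} (hu : C u) : ∃ v, IsFirstOn p C v := by
  classical
  have hex : ∃ n, ∃ v, (verts p)[n]? = some v ∧ C v :=
    (List.mem_iff_getElem?.1 (hC u hu)).imp fun _ hn => ⟨u, hn, hu⟩
  obtain ⟨v, hv, hCv⟩ := Nat.find_spec hex
  refine ⟨v, hCv, fun w hCw => ?_⟩
  obtain ⟨m, hm⟩ := List.mem_iff_getElem?.1 (hC w hCw)
  exact ⟨_, m, Nat.find_min' hex ⟨w, hm, hCw⟩, hv, hm⟩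

def InducesSPT (𝒱 : Set (V × Fin k × Fin k)) (T : Set (Fin k × Fin k)) : Prop :=
  ∀ a b, svsEdge 𝒱 a b ↔ (a, b) ∈ T

section Greedy

variable (P : Fin k → List (TEdge V)) (sIdx : Fin k) (T : Set (Fin k × Fin k))

/-- `o` is the switch onto `P a`; the source path has `o = none`, which imposes no constraint. -/
def IsSwitchCandidate (a b : Fin k) (o : Option V) (v : V) : Prop :=
  (∃ e ∈ P a, e.dst = v) ∧ (∃ e ∈ P b, e.src = v) ∧ ∀ w ∈ o, lt_on (P a) w v

inductive IsGreedyOnto : Fin k → Option V → Prop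
  | source : IsGreedyOnto sIdx none
  | switch {a b : Fin k} {o : Option V} {v : V} : IsGreedyOnto a o → (a, b) ∈ T →
      IsFirstOn (P b) (IsSwitchCandidate P a b o) v → IsGreedyOnto b (some v)

def greedySVS : Set (V × Fin k × Fin k) :=
  {t | ∃ o, IsGreedyOnto P sIdx T t.2.1 o ∧ (t.2.1, t.2.2) ∈ T ∧
    IsFirstOn (P t.2.2) (IsSwitchCandidate P t.2.1 t.2.2 o) t.1}

variable {P sIdx T}

lemma IsSwitchCandidate.mem_verts {a b : Fin k} {o : Option V} {v : V}
    (h : IsSwitchCandidate P a b o v) : v ∈ verts (P b) := by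
  obtain ⟨e, he, rfl⟩ := h.2.1
  exact src_mem_verts he

lemma IsGreedyOnto.reflTransGen {a : Fin k} {o : Option V} (h : IsGreedyOnto P sIdx T a o) :
    Relation.ReflTransGen (svsEdge (greedySVS P sIdx T)) sIdx a := by
  induction h with
  | source => exact .refl
  | switch ho hab hv ih => exact ih.tail ⟨_, _, ho, hab, hv⟩

variable {𝒱 : Set (V × Fin k × Fin k)} (h𝒱 : IsSVS P sIdx 𝒱) (hT : InducesSPT 𝒱 T)
include h𝒱 hT

lemma IsSVS.parent_unique {a a' b : Fin k} (hab : (a, b) ∈ T) (ha'b : (a', b) ∈ T) : a = a' := by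
  obtain ⟨v, hv⟩ := (hT a b).2 hab
  obtain ⟨v', hv'⟩ := (hT a' b).2 ha'b
  exact (h𝒱.unique_onto hv hv').2

lemma IsSVS.not_mem_into_source {a : Fin k} : (a, sIdx) ∉ T := fun h =>
  let ⟨_, hv⟩ := (hT a sIdx).2 h
  h𝒱.no_onto_source hv

lemma IsGreedyOnto.isSwitchCandidate (nd : ∀ i, (verts (P i)).Nodup) {a : Fin k}
    {o : Option V} (h : IsGreedyOnto P sIdx T a o) :
    ∀ ⦃v b⦄, (v, a, b) ∈ 𝒱 → IsSwitchCandidate P a b o v := by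
  induction h with
  | source => exact fun v b hv => ⟨(h𝒱.switch_exists hv).1, (h𝒱.switch_exists hv).2, by simp⟩
  | @switch c a o u _ hca hu ih =>
    intro v b hv
    refine ⟨(h𝒱.switch_exists hv).1, (h𝒱.switch_exists hv).2, ?_⟩
    rintro w ⟨⟩
    obtain ⟨u', hu'⟩ := (hT c a).2 hca
    exact (hu.2 u' (ih hu')).trans_lt (nd a) (h𝒱.onto_before_off hu' hv)

lemma exists_isGreedyOnto (nd : ∀ i, (verts (P i)).Nodup) {b : Fin k}
    (hb : Relation.ReflTransGen (svsEdge 𝒱) sIdx b) : ∃ o, IsGreedyOnto P sIdx T b o := by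
  induction hb with
  | refl => exact ⟨none, .source⟩
  | tail _ hcb ih =>
    obtain ⟨o, ho⟩ := ih
    obtain ⟨v₀, hv₀⟩ := hcb
    obtain ⟨v, hv⟩ := exists_isFirstOn (fun _ hu => hu.mem_verts)
      (ho.isSwitchCandidate h𝒱 hT nd hv₀)
    exact ⟨some v, ho.switch ((hT _ _).1 ⟨v₀, hv₀⟩) hv⟩

lemma IsGreedyOnto.unique (nd : ∀ i, (verts (P i)).Nodup) {b : Fin k} {o o' : Option V}
    (h : IsGreedyOnto P sIdx T b o) (h' : IsGreedyOnto P sIdx T b o') : o = o' := by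
  induction h generalizing o' with
  | source =>
    cases h' with
    | source => rfl
    | switch _ hab _ => exact (h𝒱.not_mem_into_source hT hab).elim
  | switch _ hab hv ih =>
    cases h' with
    | source => exact (h𝒱.not_mem_into_source hT hab).elim
    | switch ho' ha'b hv' =>
      obtain rfl := h𝒱.parent_unique hT hab ha'b
      obtain rfl := ih ho'
      rw [hv.eq (nd _) hv']

lemma isSVS_greedySVS (nd : ∀ i, (verts (P i)).Nodup) : IsSVS P sIdx (greedySVS P sIdx T) where
  switch_exists := fun _ _ _ ⟨_, _, _, hv⟩ => ⟨hv.1.1, hv.1.2.1⟩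
  unique_onto := by
    rintro v v' a a' b ⟨o, ho, hab, hv⟩ ⟨o', ho', ha'b, hv'⟩
    have := (ho.switch hab hv).unique h𝒱 hT nd (ho'.switch ha'b hv')
    exact ⟨Option.some.inj this, h𝒱.parent_unique hT hab ha'b⟩
  no_onto_source := fun _ _ ⟨_, _, has, _⟩ => h𝒱.not_mem_into_source hT has
  onto_before_off := by
    rintro v a b ⟨o, ho, hab, hv⟩ v' c ⟨o', ho', -, hv'⟩
    obtain rfl := ho'.unique h𝒱 hT nd (ho.switch hab hv)
    exact hv'.1.2.2 v rfl
  tree := fun _ _ _ ⟨_, ho, _⟩ => ho.reflTransGen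

lemma inducesSPT_greedySVS (nd : ∀ i, (verts (P i)).Nodup) :
    InducesSPT (greedySVS P sIdx T) T := by
  refine fun a b => ⟨fun ⟨_, _, _, hab, _⟩ => hab, fun hab => ?_⟩
  obtain ⟨v₀, hv₀⟩ := (hT a b).2 hab
  obtain ⟨o, ho⟩ := exists_isGreedyOnto h𝒱 hT nd (h𝒱.tree hv₀)
  obtain ⟨v, hv⟩ := exists_isFirstOn (fun _ hu => hu.mem_verts)
    (ho.isSwitchCandidate h𝒱 hT nd hv₀)
  exact ⟨v, o, ho, hab, hv⟩

lemma le_on_of_mem_greedySVS (nd : ∀ i, (verts (P i)).Nodup) {v v' : V} {a b : Fin k}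
    (hv : (v, a, b) ∈ greedySVS P sIdx T) (hv' : (v', a, b) ∈ 𝒱) : le_on (P b) v v' :=
  let ⟨_, ho, _, hfirst⟩ := hv
  hfirst.2 v' (ho.isSwitchCandidate h𝒱 hT nd hv')

end Greedy

theorem stmt15_general {V : Type} {k : ℕ} (P : Fin k → List (TEdge V))
    (hnd : ∀ i, (verts (P i)).Nodup)
    (sIdx : Fin k)
    (T : Set (Fin k × Fin k))
    (hT : ∃ 𝒱₀ : Set (V × Fin k × Fin k), IsSVS P sIdx 𝒱₀ ∧
      ∀ a b : Fin k, svsEdge 𝒱₀ a b ↔ (a, b) ∈ T) :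
    ∃ 𝒱 : Set (V × Fin k × Fin k), IsSVS P sIdx 𝒱 ∧
      (∀ a b : Fin k, svsEdge 𝒱 a b ↔ (a, b) ∈ T) ∧
      ∀ 𝒱' : Set (V × Fin k × Fin k), IsSVS P sIdx 𝒱' →
        (∀ a b : Fin k, svsEdge 𝒱' a b ↔ (a, b) ∈ T) →
        ∀ ⦃v v' : V⦄ ⦃a b : Fin k⦄, (v, a, b) ∈ 𝒱 → (v', a, b) ∈ 𝒱' →
          le_on (P b) v v' ∧ ∀ w, le_on (P b) v' w → le_on (P b) v w := by
  obtain ⟨𝒱₀, h₀, hT₀⟩ := hT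
  refine ⟨greedySVS P sIdx T, isSVS_greedySVS h₀ hT₀ hnd, inducesSPT_greedySVS h₀ hT₀ hnd,
    fun 𝒱' h' hT' v v' a b hv hv' => ?_⟩
  have hle : le_on (P b) v v' := le_on_of_mem_greedySVS h' hT' hnd hv hv'
  exact ⟨hle, fun w hw => hle.trans (hnd b) hw⟩

/-- Let `⊎ P` be a temporal `k`-path graph whose source `s` is
the first vertex of the base-path `P sIdx`, and let `T` be a switch-path-tree
realized by at least one switch-vertex-set. Then there is a (greedy)
switch-vertex-set `𝒱` realizing `T` that is pointwise earliest: for every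
switch-vertex-set `𝒱'` realizing `T` and every switch `(v', a, b) ∈ 𝒱'`, the
corresponding switch vertex `v` of `𝒱` occurs on `P b` at or before `v'`;
consequently the suffix of `P b` from `v'` is contained in the suffix from `v`. -/
theorem stmt15 {V : Type} {k : ℕ} (P : Fin k → List (TEdge V))
    (hP : ∀ i, IsTemporalPath (P i)) (hnd : ∀ i, (verts (P i)).Nodup)
    (sIdx : Fin k) (s : V)
    (hfirst : (verts (P sIdx)).head? = some s)
    (T : Set (Fin k × Fin k))
    (hT : ∃ 𝒱₀ : Set (V × Fin k × Fin k), IsSVS P sIdx 𝒱₀ ∧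
      ∀ a b : Fin k, svsEdge 𝒱₀ a b ↔ (a, b) ∈ T) :
    ∃ 𝒱 : Set (V × Fin k × Fin k), IsSVS P sIdx 𝒱 ∧
      (∀ a b : Fin k, svsEdge 𝒱 a b ↔ (a, b) ∈ T) ∧
      ∀ 𝒱' : Set (V × Fin k × Fin k), IsSVS P sIdx 𝒱' →
        (∀ a b : Fin k, svsEdge 𝒱' a b ↔ (a, b) ∈ T) →
        ∀ ⦃v v' : V⦄ ⦃a b : Fin k⦄, (v, a, b) ∈ 𝒱 → (v', a, b) ∈ 𝒱' →
          le_on (P b) v v' ∧ ∀ w, le_on (P b) v' w → le_on (P b) v w :=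
  stmt15_general P hnd sIdx T hT
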